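/- Cantor-set case of Theorem 3.3: if f_0(I) ∪ f_1(I) ⊊ I (equivalently f_1(p_0) < f_0(p_1), the non-overlapping case), then supp(Q) is a Cantor set: it is a nonempty compact subset of I that is totally disconnected and perfect (has no isolated points). -/

import Mathlib

open MeasureTheory

/-- `f_0(x) = ((1−ε)/ε)·(π_00 x + π_10)/(π_01 x + π_11)`. -/
noncomputable def f₀ (π00 π01 π10 π11 ε : ℝ) (x : ℝ) : ℝ :=
  ((1 - ε) / ε) * ((π00 * x + π10) / (π01 * x + π11))

/-- `f_1(x) = (ε/(1−ε))·(π_00 x + π_10)/(π_01 x + π_11)`. -/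
noncomputable def f₁ (π00 π01 π10 π11 ε : ℝ) (x : ℝ) : ℝ :=
  (ε / (1 - ε)) * ((π00 * x + π10) / (π01 * x + π11))

/-- `r_0(x) = (((1−ε)π_00 + επ_01)x + ((1−ε)π_10 + επ_11))/(x+1)`. -/
noncomputable def r₀ (π00 π01 π10 π11 ε : ℝ) (x : ℝ) : ℝ :=
  (((1 - ε) * π00 + ε * π01) * x + ((1 - ε) * π10 + ε * π11)) / (x + 1)

/-- `r_1(x) = ((επ_00 + (1−ε)π_01)x + (επ_10 + (1−ε)π_11))/(x+1)`. -/
noncomputable def r₁ (π00 π01 π10 π11 ε : ℝ) (x : ℝ) : ℝ :=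
  ((ε * π00 + (1 - ε) * π01) * x + (ε * π10 + (1 - ε) * π11)) / (x + 1)

/-- `f_b` for a binary symbol `b`. -/
noncomputable def fb (π00 π01 π10 π11 ε : ℝ) (b : Bool) : ℝ → ℝ :=
  if b then f₁ π00 π01 π10 π11 ε else f₀ π00 π01 π10 π11 ε

/-- The support of a measure on `ℝ`: the set of points all of whose open neighborhoods
have positive measure (the smallest closed set of full measure). -/
def measSupp (Q : Measure ℝ) : Set ℝ :=
  {x : ℝ | ∀ U : Set ℝ, IsOpen U → x ∈ U → 0 < Q U}

/-- Blackwell's invariance equation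
`Q(E) = ∫_{f_0^{−1}(E)} r_0 dQ + ∫_{f_1^{−1}(E)} r_1 dQ` for Borel `E ⊆ (0,∞)`. -/
def BlackwellInvariant (π00 π01 π10 π11 ε : ℝ) (Q : Measure ℝ) : Prop :=
  ∀ E : Set ℝ, MeasurableSet E → E ⊆ Set.Ioi (0 : ℝ) →
    Q E = (∫⁻ x in f₀ π00 π01 π10 π11 ε ⁻¹' E, ENNReal.ofReal (r₀ π00 π01 π10 π11 ε x) ∂Q)
      + ∫⁻ x in f₁ π00 π01 π10 π11 ε ⁻¹' E, ENNReal.ofReal (r₁ π00 π01 π10 π11 ε x) ∂Q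

/-! In the coordinate `log x`, an increasing Möbius map `x ↦ (a x + b)/(c x + d)` with positive
coefficients is a contraction with factor `(ad - bc)/(ad + bc) < 1`. The invariance equation
makes `supp Q` a compact subset of `(0, ∞)` equal to `f₀(supp Q) ∪ f₁(supp Q)`, and comparing its
extreme points with the fixed points puts it inside `I`. Non-overlap means `f₁(p₀) < f₀(p₁)`, so
the two pieces are disjoint. A compact set that is the disjoint union of its images under two
injective contractions with factor `K` is a Cantor set: a connected subset lies in one piece and
pulls back to a connected subset, so by induction its diameter is at most `Kⁿ diam S` for every
`n`; in the same way every point has another point of the set within `Kⁿ diam S`. -/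

open Set Filter Topology Function
open scoped NNReal ENNReal

theorem IsPreconnected.inter_preimage_of_injOn {X Y : Type*} [TopologicalSpace X]
    [TopologicalSpace Y] [T2Space Y] {S : Set X} {C : Set Y} {F : X → Y}
    (hC : IsPreconnected C) (hS : IsCompact S) (hF : ContinuousOn F S) (hinj : InjOn F S)
    (hCS : C ⊆ F '' S) : IsPreconnected (S ∩ F ⁻¹' C) := by
  have := isCompact_iff_compactSpace.mp hS
  have hpre : IsPreconnected (S.domRestrict F ⁻¹' C) :=
    hC.preimage_of_isClosedMap (injOn_iff_injective.mp hinj) hF.domRestrict.isClosedMap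
      (by rwa [range_domRestrict])
  rw [← Subtype.image_preimage_coe]
  exact hpre.image _ continuous_subtype_val.continuousOn

theorem IsTotallyDisconnected.of_image {X Y : Type*} [TopologicalSpace X] [TopologicalSpace Y]
    {S : Set X} {f : X → Y} (h : IsTotallyDisconnected (f '' S)) (hf : ContinuousOn f S)
    (hinj : InjOn f S) : IsTotallyDisconnected S := fun _ hts ht _ hx _ hy =>
  hinj (hts hx) (hts hy) <| h _ (image_mono hts) (ht.image f (hf.mono hts))
    (mem_image_of_mem f hx) (mem_image_of_mem f hy)

theorem Preperfect.image_of_injective {X Y : Type*} [TopologicalSpace X] [TopologicalSpace Y]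
    {S : Set X} {f : X → Y} (h : Preperfect S) (hf : Continuous f) (hinj : Injective f) :
    Preperfect (f '' S) := by
  rw [preperfect_iff_nhds] at h ⊢
  rintro _ ⟨x, hx, rfl⟩ U hU
  obtain ⟨y, ⟨hyU, hyS⟩, hyx⟩ := h x hx _ (hf.continuousAt.preimage_mem_nhds hU)
  exact ⟨f y, ⟨hyU, mem_image_of_mem f hyS⟩, hinj.ne hyx⟩

theorem tendsto_pow_mul_nhds_zero {K : ℝ≥0} (hK : K < 1) (D : ℝ) :
    Tendsto (fun n : ℕ => (K : ℝ) ^ n * D) atTop (𝓝 0) := by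
  simpa using (tendsto_pow_atTop_nhds_zero_of_lt_one K.2 hK).mul_const D

section SelfSimilar

variable {X : Type*} [MetricSpace X] {S : Set X} {F₀ F₁ : X → X} {K : ℝ≥0}
  (hS : IsCompact S) (hself : S = F₀ '' S ∪ F₁ '' S) (hdisj : Disjoint (F₀ '' S) (F₁ '' S))
  (hlip₀ : LipschitzOnWith K F₀ S) (hlip₁ : LipschitzOnWith K F₁ S)
  (hinj₀ : InjOn F₀ S) (hinj₁ : InjOn F₁ S)
include hS hself hdisj hlip₀ hlip₁ hinj₀ hinj₁

theorem dist_le_pow_mul_diam_of_isPreconnected (n : ℕ) {C : Set X} (hC : IsPreconnected C)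
    (hCS : C ⊆ S) {x y : X} (hx : x ∈ C) (hy : y ∈ C) :
    dist x y ≤ (K : ℝ) ^ n * Metric.diam S := by
  induction n generalizing C x y with
  | zero => simpa using Metric.dist_le_diam_of_mem hS.isBounded (hCS hx) (hCS hy)
  | succ n ih =>
    have pullback : ∀ F : X → X, LipschitzOnWith K F S → InjOn F S → C ⊆ F '' S →
        dist x y ≤ (K : ℝ) ^ (n + 1) * Metric.diam S := by
      intro F hlip hinj hCF
      have hC' := hC.inter_preimage_of_injOn hS hlip.continuousOn hinj hCF
      obtain ⟨x', hx', rfl⟩ := hCF hx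
      obtain ⟨y', hy', rfl⟩ := hCF hy
      calc dist (F x') (F y') ≤ K * dist x' y' := hlip.dist_le_mul x' hx' y' hy'
        _ ≤ K * ((K : ℝ) ^ n * Metric.diam S) := by
          gcongr; exact ih hC' inter_subset_left ⟨hx', hx⟩ ⟨hy', hy⟩
        _ = (K : ℝ) ^ (n + 1) * Metric.diam S := by ring
    have hclosed : ∀ F : X → X, LipschitzOnWith K F S → IsClosed (F '' S) := fun F hlip =>
      (hS.image_of_continuousOn hlip.continuousOn).isClosed
    rcases isPreconnected_iff_subset_of_disjoint_closed.mp hC _ _ (hclosed F₀ hlip₀)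
      (hclosed F₁ hlip₁) (hCS.trans hself.subset) (by rw [hdisj.inter_eq, inter_empty])
      with hC₀ | hC₁
    · exact pullback F₀ hlip₀ hinj₀ hC₀
    · exact pullback F₁ hlip₁ hinj₁ hC₁

theorem exists_ne_dist_le_pow_mul_diam (n : ℕ) {x : X} (hx : x ∈ S) :
    ∃ y ∈ S, y ≠ x ∧ dist x y ≤ (K : ℝ) ^ n * Metric.diam S := by
  have hF₀S : F₀ '' S ⊆ S := subset_union_left.trans hself.symm.subset
  have hF₁S : F₁ '' S ⊆ S := subset_union_right.trans hself.symm.subset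
  induction n generalizing x with
  | zero =>
    suffices ∃ y ∈ S, y ≠ x by
      obtain ⟨y, hy, hyx⟩ := this
      exact ⟨y, hy, hyx, by simpa using Metric.dist_le_diam_of_mem hS.isBounded hx hy⟩
    rcases hself.subset hx with ⟨s, hs, rfl⟩ | ⟨s, hs, rfl⟩
    · exact ⟨F₁ s, hF₁S (mem_image_of_mem F₁ hs),
        (hdisj.ne_of_mem (mem_image_of_mem F₀ hs) (mem_image_of_mem F₁ hs)).symm⟩
    · exact ⟨F₀ s, hF₀S (mem_image_of_mem F₀ hs),
        hdisj.ne_of_mem (mem_image_of_mem F₀ hs) (mem_image_of_mem F₁ hs)⟩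
  | succ n ih =>
    have push : ∀ F : X → X, LipschitzOnWith K F S → InjOn F S → F '' S ⊆ S → ∀ x' ∈ S,
        ∃ y ∈ S, y ≠ F x' ∧ dist (F x') y ≤ (K : ℝ) ^ (n + 1) * Metric.diam S := by
      intro F hlip hinj hFS x' hx'
      obtain ⟨y', hy', hyx', hdist⟩ := ih hx'
      refine ⟨F y', hFS (mem_image_of_mem F hy'), fun h => hyx' (hinj hy' hx' h), ?_⟩
      calc dist (F x') (F y') ≤ K * dist x' y' := hlip.dist_le_mul x' hx' y' hy'
        _ ≤ K * ((K : ℝ) ^ n * Metric.diam S) := by gcongr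
        _ = (K : ℝ) ^ (n + 1) * Metric.diam S := by ring
    rcases hself.subset hx with ⟨x', hx', rfl⟩ | ⟨x', hx', rfl⟩
    · exact push F₀ hlip₀ hinj₀ hF₀S x' hx'
    · exact push F₁ hlip₁ hinj₁ hF₁S x' hx'

variable (hK : K < 1)
include hK

theorem isTotallyDisconnected_of_selfSimilar : IsTotallyDisconnected S :=
  fun _ hCS hC _ hx _ hy => dist_le_zero.mp <| ge_of_tendsto' (tendsto_pow_mul_nhds_zero hK _)
    fun n => dist_le_pow_mul_diam_of_isPreconnected hS hself hdisj hlip₀ hlip₁ hinj₀ hinj₁ n hC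
      hCS hx hy

theorem perfect_of_selfSimilar : Perfect S := by
  refine ⟨hS.isClosed, preperfect_iff_nhds.mpr fun x hx U hU => ?_⟩
  obtain ⟨r, hr, hball⟩ := Metric.mem_nhds_iff.mp hU
  obtain ⟨n, hn⟩ := ((tendsto_pow_mul_nhds_zero hK _).eventually (gt_mem_nhds hr)).exists
  obtain ⟨y, hy, hyx, hdist⟩ :=
    exists_ne_dist_le_pow_mul_diam hS hself hdisj hlip₀ hlip₁ hinj₀ hinj₁ n hx
  exact ⟨y, ⟨hball (by rw [Metric.mem_ball, dist_comm]; exact hdist.trans_lt hn), hy⟩, hyx⟩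

end SelfSimilar

noncomputable def logConj (F : ℝ → ℝ) : ℝ → ℝ := fun u => Real.log (F (Real.exp u))

theorem image_logConj_image_log {S : Set ℝ} (hS : S ⊆ Ioi 0) (F : ℝ → ℝ) :
    logConj F '' (Real.log '' S) = Real.log '' (F '' S) := by
  rw [image_image, image_image]
  exact image_congr fun x hx => by rw [logConj, Real.exp_log (hS hx)]

theorem isTotallyDisconnected_and_perfect_of_logConj {S : Set ℝ} {F₀ F₁ : ℝ → ℝ} {K : ℝ≥0}
    (hS : IsCompact S) (hpos : S ⊆ Ioi 0) (hself : S = F₀ '' S ∪ F₁ '' S)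
    (hdisj : Disjoint (F₀ '' S) (F₁ '' S)) (hK : K < 1) (hlip₀ : LipschitzWith K (logConj F₀))
    (hlip₁ : LipschitzWith K (logConj F₁)) (hinj₀ : Injective (logConj F₀))
    (hinj₁ : Injective (logConj F₁)) : IsTotallyDisconnected S ∧ Perfect S := by
  have hlog : ContinuousOn Real.log S := Real.continuousOn_log.mono fun x hx => (hpos hx).ne'
  have hlog_inj : InjOn Real.log S := Real.log_injOn_pos.mono hpos
  have hT : IsCompact (Real.log '' S) := hS.image_of_continuousOn hlog
  have hselfT : Real.log '' S =
      logConj F₀ '' (Real.log '' S) ∪ logConj F₁ '' (Real.log '' S) := by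
    rw [image_logConj_image_log hpos, image_logConj_image_log hpos, ← image_union, ← hself]
  have hdisjT : Disjoint (logConj F₀ '' (Real.log '' S)) (logConj F₁ '' (Real.log '' S)) := by
    rw [image_logConj_image_log hpos, image_logConj_image_log hpos, disjoint_iff_inter_eq_empty,
      ← hlog_inj.image_inter (subset_union_left.trans hself.symm.subset)
        (subset_union_right.trans hself.symm.subset), hdisj.inter_eq, image_empty]
  have hexp : Real.exp '' (Real.log '' S) = S := by
    rw [image_image]
    exact (image_congr fun x hx => Real.exp_log (hpos hx)).trans (image_id' S)
  refine ⟨(isTotallyDisconnected_of_selfSimilar hT hselfT hdisjT hlip₀.lipschitzOnWith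
    hlip₁.lipschitzOnWith hinj₀.injOn hinj₁.injOn hK).of_image hlog hlog_inj, hS.isClosed, ?_⟩
  rw [← hexp]
  exact (perfect_of_selfSimilar hT hselfT hdisjT hlip₀.lipschitzOnWith hlip₁.lipschitzOnWith
    hinj₀.injOn hinj₁.injOn hK).acc.image_of_injective Real.continuous_exp Real.exp_injective

theorem lt_of_image_union_ssubset_Icc {F₀ F₁ : ℝ → ℝ} {p₀ p₁ : ℝ}
    (hF₀ : ContinuousOn F₀ (Icc p₁ p₀)) (hF₁ : ContinuousOn F₁ (Icc p₁ p₀))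
    (hfix₀ : IsFixedPt F₀ p₀) (hfix₁ : IsFixedPt F₁ p₁)
    (hss : F₀ '' Icc p₁ p₀ ∪ F₁ '' Icc p₁ p₀ ⊂ Icc p₁ p₀) : F₁ p₀ < F₀ p₁ := by
  have hp : p₁ ≤ p₀ := by
    by_contra! h
    simp [Icc_eq_empty_of_lt h] at hss
  refine lt_of_not_ge fun hle => hss.not_subset fun t ht => ?_
  rcases le_or_gt t (F₁ p₀) with htF₁ | htF₁
  · exact Or.inr (intermediate_value_Icc hp hF₁ ⟨hfix₁.symm ▸ ht.1, htF₁⟩)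
  · exact Or.inl (intermediate_value_Icc hp hF₀ ⟨hle.trans htF₁.le, hfix₀.symm ▸ ht.2⟩)

theorem disjoint_image_of_lt {F₀ F₁ : ℝ → ℝ} {S : Set ℝ} {p₀ p₁ : ℝ} (hS : S ⊆ Icc p₁ p₀)
    (hF₀ : MonotoneOn F₀ (Icc p₁ p₀)) (hF₁ : MonotoneOn F₁ (Icc p₁ p₀))
    (hgap : F₁ p₀ < F₀ p₁) : Disjoint (F₀ '' S) (F₁ '' S) := by
  rw [disjoint_left]
  rintro _ ⟨x, hx, rfl⟩ ⟨y, hy, hyx⟩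
  have hx' := hS hx
  have hy' := hS hy
  have h₀ := hF₀ (left_mem_Icc.mpr (hx'.1.trans hx'.2)) hx' hx'.1
  have h₁ := hF₁ hy' (right_mem_Icc.mpr (hy'.1.trans hy'.2)) hy'.2
  linarith

theorem subset_Icc_of_subset_image_union {F₀ F₁ : ℝ → ℝ} {S : Set ℝ} {p₀ p₁ : ℝ}
    (hS : IsCompact S) (hself : S ⊆ F₀ '' S ∪ F₁ '' S) (hle : ∀ x ∈ S, F₁ x ≤ F₀ x)
    (hF₀ : MonotoneOn F₀ S) (hF₁ : MonotoneOn F₁ S) (hp₀ : ∀ x ∈ S, p₀ < x → F₀ x < x)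
    (hp₁ : ∀ x ∈ S, x < p₁ → x < F₁ x) : S ⊆ Icc p₁ p₀ := by
  -- the minimum `m = F_b s` of `S` satisfies `F₁ m ≤ F₁ s ≤ m`, so `m ≥ p₁`; dually for the maximum
  intro x hx
  have hne : S.Nonempty := ⟨x, hx⟩
  have hm := hS.sInf_mem hne
  have hM := hS.sSup_mem hne
  constructor
  · refine le_trans (not_lt.mp fun hlt => ?_) (csInf_le hS.bddBelow hx)
    have hm_lt := hp₁ _ hm hlt
    rcases hself hm with ⟨s, hs, hsm⟩ | ⟨s, hs, hsm⟩
    · have := hF₁ hm hs (csInf_le hS.bddBelow hs)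
      linarith [hle s hs]
    · have := hF₁ hm hs (csInf_le hS.bddBelow hs)
      linarith
  · refine le_trans (le_csSup hS.bddAbove hx) (not_lt.mp fun hlt => ?_)
    have hM_lt := hp₀ _ hM hlt
    rcases hself hM with ⟨s, hs, hsM⟩ | ⟨s, hs, hsM⟩
    · have := hF₀ hs hM (le_csSup hS.bddAbove hs)
      linarith
    · have := hF₀ hs hM (le_csSup hS.bddAbove hs)
      linarith [hle s hs]

-- The cofactor `c p x + b` is positive, so `x - (a x + b)/(c x + d)` has the sign of `x - p`.
theorem mobius_fixedPt_identity {a b c d p x : ℝ} (hfix : a * p + b = p * (c * p + d)) :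
    p * (x * (c * x + d) - (a * x + b)) = (x - p) * (c * p * x + b) := by
  linear_combination (-x) * hfix

def IsPosMobius (F : ℝ → ℝ) : Prop :=
  ∃ a b c d : ℝ, 0 < a ∧ 0 < b ∧ 0 < c ∧ 0 < d ∧ b * c < a * d ∧
    F = fun x => (a * x + b) / (c * x + d)

namespace IsPosMobius

variable {F : ℝ → ℝ}

theorem const_mul (hF : IsPosMobius F) {κ : ℝ} (hκ : 0 < κ) :
    IsPosMobius fun x => κ * F x := by
  obtain ⟨a, b, c, d, ha, hb, hc, hd, hdet, rfl⟩ := hF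
  refine ⟨κ * a, κ * b, c, d, by positivity, by positivity, hc, hd, by nlinarith, ?_⟩
  funext x
  ring

theorem pos (hF : IsPosMobius F) {x : ℝ} (hx : 0 ≤ x) : 0 < F x := by
  obtain ⟨a, b, c, d, ha, hb, hc, hd, -, rfl⟩ := hF
  positivity

theorem continuousOn (hF : IsPosMobius F) : ContinuousOn F (Ici 0) := by
  obtain ⟨a, b, c, d, -, -, hc, hd, -, rfl⟩ := hF
  exact ContinuousOn.div (by fun_prop) (by fun_prop) fun x (hx : 0 ≤ x) => by positivity

theorem strictMonoOn (hF : IsPosMobius F) : StrictMonoOn F (Ici 0) := by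
  obtain ⟨a, b, c, d, ha, hb, hc, hd, hdet, rfl⟩ := hF
  intro x (hx : 0 ≤ x) y (hy : 0 ≤ y) hxy
  rw [div_lt_div_iff₀ (by positivity) (by positivity)]
  nlinarith [mul_lt_mul_of_pos_right hdet (sub_pos.mpr hxy)]

theorem exists_mapsTo_Icc (hF : IsPosMobius F) : ∃ α β, 0 < α ∧ MapsTo F (Ioi 0) (Icc α β) := by
  obtain ⟨a, b, c, d, ha, hb, hc, hd, hdet, rfl⟩ := hF
  refine ⟨b / d, a / c, by positivity, fun x (hx : 0 < x) => ⟨?_, ?_⟩⟩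
  · rw [div_le_div_iff₀ hd (by positivity)]
    nlinarith [mul_lt_mul_of_pos_right hdet hx]
  · rw [div_le_div_iff₀ (by positivity) hc]
    nlinarith

theorem apply_lt_self (hF : IsPosMobius F) {p x : ℝ} (hp : 0 < p) (hfix : IsFixedPt F p)
    (hpx : p < x) : F x < x := by
  obtain ⟨a, b, c, d, ha, hb, hc, hd, -, rfl⟩ := hF
  have hfix' : a * p + b = p * (c * p + d) := (div_eq_iff (by positivity)).mp hfix
  have key := mobius_fixedPt_identity (x := x) hfix'
  have hx : 0 < x := hp.trans hpx
  show (a * x + b) / (c * x + d) < x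
  rw [div_lt_iff₀ (by positivity)]
  nlinarith [mul_pos (sub_pos.mpr hpx) (by positivity : 0 < c * p * x + b)]

theorem self_lt_apply (hF : IsPosMobius F) {p x : ℝ} (hfix : IsFixedPt F p) (hx : 0 ≤ x)
    (hxp : x < p) : x < F x := by
  obtain ⟨a, b, c, d, ha, hb, hc, hd, -, rfl⟩ := hF
  have hp : 0 < p := hx.trans_lt hxp
  have hfix' : a * p + b = p * (c * p + d) := (div_eq_iff (by positivity)).mp hfix
  have key := mobius_fixedPt_identity (x := x) hfix'
  show x < (a * x + b) / (c * x + d)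
  rw [lt_div_iff₀ (by positivity)]
  nlinarith [mul_pos (sub_pos.mpr hxp) (by positivity : 0 < c * p * x + b)]

theorem exists_lipschitzWith_logConj (hF : IsPosMobius F) :
    ∃ K : ℝ≥0, K < 1 ∧ LipschitzWith K (logConj F) := by
  obtain ⟨a, b, c, d, ha, hb, hc, hd, hdet, rfl⟩ := hF
  have hρ0 : 0 ≤ (a * d - b * c) / (a * d + b * c) := by
    apply div_nonneg <;> nlinarith [mul_pos hb hc]
  refine ⟨Real.toNNReal ((a * d - b * c) / (a * d + b * c)), ?_, ?_⟩
  · rw [Real.toNNReal_lt_one, div_lt_one (by positivity)]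
    nlinarith [mul_pos hb hc]
  have hlog : logConj (fun x => (a * x + b) / (c * x + d)) =
      fun u => Real.log (a * Real.exp u + b) - Real.log (c * Real.exp u + d) :=
    funext fun u => Real.log_div (by positivity) (by positivity)
  rw [hlog]
  refine lipschitzOnWith_univ.mp (convex_univ.lipschitzOnWith_of_nnnorm_hasDerivWithin_le
    (f' := fun u => a * Real.exp u / (a * Real.exp u + b) - c * Real.exp u / (c * Real.exp u + d))
    (fun u _ => ?_) fun u _ => ?_)
  · exact (((((Real.hasDerivAt_exp u).const_mul a).add_const b).log (by positivity)).sub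
      ((((Real.hasDerivAt_exp u).const_mul c).add_const d).log (by positivity))).hasDerivWithinAt
  · rw [← NNReal.coe_le_coe, coe_nnnorm, Real.coe_toNNReal _ hρ0, Real.norm_eq_abs]
    set t := Real.exp u
    have ht : 0 < t := Real.exp_pos u
    -- `(a t + b)(c t + d) ≥ (a d + b c) t` bounds the logarithmic derivative
    have hderiv : a * t / (a * t + b) - c * t / (c * t + d) =
        (a * d - b * c) * t / ((a * t + b) * (c * t + d)) := by
      field_simp
      ring
    rw [hderiv, abs_of_nonneg (div_nonneg (by nlinarith) (by positivity)),
      div_le_div_iff₀ (by positivity) (by positivity)]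
    nlinarith [mul_pos (mul_pos ha hc) (mul_pos ht ht), mul_pos hb hd, mul_pos (sub_pos.mpr hdet) ht]

theorem strictMono_logConj (hF : IsPosMobius F) : StrictMono (logConj F) := fun u v huv =>
  Real.log_lt_log (hF.pos (Real.exp_pos u).le)
    (hF.strictMonoOn (Real.exp_pos u).le (Real.exp_pos v).le (Real.exp_lt_exp.mpr huv))

end IsPosMobius

theorem measSupp_eq_support (Q : Measure ℝ) : measSupp Q = Q.support := by
  rw [Measure.support_eq_forall_isOpen]
  ext x
  exact forall_congr' fun _ => forall_comm

open Measure in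
theorem map_mem_support {Q : Measure ℝ} {g : ℝ → ℝ} {w : ℝ → ℝ≥0∞}
    (hle : ∀ E, MeasurableSet E → E ⊆ Ioi 0 → ∫⁻ x in g ⁻¹' E, w x ∂Q ≤ Q E)
    (hg : ContinuousOn g (Ioi 0)) (hw : Measurable w) (hwpos : ∀ x ∈ Ioi 0, w x ≠ 0) {x : ℝ}
    (hx : x ∈ Q.support) (hx0 : 0 < x) (hgx : 0 < g x) : g x ∈ Q.support := by
  rw [mem_support_iff_forall]
  intro U hU
  obtain ⟨V, hVU, hV, hgV⟩ := mem_nhds_iff.mp hU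
  have hE : IsOpen (V ∩ Ioi 0) := hV.inter isOpen_Ioi
  have hO : IsOpen (Ioi 0 ∩ g ⁻¹' (V ∩ Ioi 0)) := hg.isOpen_inter_preimage isOpen_Ioi hE
  have hQO := (mem_support_iff_forall x).mp hx _ (hO.mem_nhds ⟨hx0, hgV, hgx⟩)
  calc 0 < ∫⁻ y in Ioi 0 ∩ g ⁻¹' (V ∩ Ioi 0), w y ∂Q := by
        rw [setLIntegral_pos_iff hw]
        exact hQO.trans_le (measure_mono fun y hy => ⟨hwpos y hy.1, hy⟩)
    _ ≤ ∫⁻ y in g ⁻¹' (V ∩ Ioi 0), w y ∂Q := lintegral_mono_set inter_subset_right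
    _ ≤ Q (V ∩ Ioi 0) := hle _ hE.measurableSet inter_subset_right
    _ ≤ Q U := measure_mono (inter_subset_left.trans hVU)

section WeightedInvariance

open Measure

variable {Q : Measure ℝ} {g₀ g₁ : ℝ → ℝ} {w₀ w₁ : ℝ → ℝ≥0∞}
  (hQ : ∀ E, MeasurableSet E → E ⊆ Ioi 0 →
    Q E = (∫⁻ x in g₀ ⁻¹' E, w₀ x ∂Q) + ∫⁻ x in g₁ ⁻¹' E, w₁ x ∂Q)
  (hQ0 : Q (Iic 0) = 0)
include hQ hQ0

theorem measure_eq_zero_of_measure_preimage_eq_zero {E : Set ℝ} (hE : MeasurableSet E)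
    (h₀ : Q (g₀ ⁻¹' E) = 0) (h₁ : Q (g₁ ⁻¹' E) = 0) : Q E = 0 := by
  have hpos : Q (E ∩ Ioi 0) = 0 := by
    rw [hQ _ (hE.inter measurableSet_Ioi) inter_subset_right,
      setLIntegral_measure_zero _ _ (measure_mono_null (preimage_mono inter_subset_left) h₀),
      setLIntegral_measure_zero _ _ (measure_mono_null (preimage_mono inter_subset_left) h₁),
      add_zero]
  refine measure_mono_null (fun x hx => ?_) (measure_union_null hpos hQ0)
  rcases lt_or_ge 0 x with h | h
  exacts [Or.inl ⟨hx, h⟩, Or.inr h]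

theorem support_subset_of_mapsTo {J : Set ℝ} (hJ : IsClosed J) (h₀ : MapsTo g₀ (Ioi 0) J)
    (h₁ : MapsTo g₁ (Ioi 0) J) : Q.support ⊆ J := by
  refine support_subset_of_isClosed hJ (mem_ae_iff.mpr
    (measure_eq_zero_of_measure_preimage_eq_zero hQ hQ0 hJ.isOpen_compl.measurableSet ?_ ?_))
  · exact measure_mono_null (fun x hx => mem_Iic.mpr (not_lt.mp fun h => hx (h₀ h))) hQ0
  · exact measure_mono_null (fun x hx => mem_Iic.mpr (not_lt.mp fun h => hx (h₁ h))) hQ0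

theorem support_subset_image_union (hK : IsClosed (g₀ '' Q.support ∪ g₁ '' Q.support)) :
    Q.support ⊆ g₀ '' Q.support ∪ g₁ '' Q.support := by
  refine support_subset_of_isClosed hK (mem_ae_iff.mpr
    (measure_eq_zero_of_measure_preimage_eq_zero hQ hQ0 hK.isOpen_compl.measurableSet ?_ ?_))
  · exact measure_mono_null (fun x hx hxS => hx (Or.inl (mem_image_of_mem g₀ hxS)))
      measure_compl_support
  · exact measure_mono_null (fun x hx hxS => hx (Or.inr (mem_image_of_mem g₁ hxS)))
      measure_compl_support

theorem isCompact_support_of_isPosMobius (hg₀ : IsPosMobius g₀) (hg₁ : IsPosMobius g₁) :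
    IsCompact Q.support ∧ Q.support ⊆ Ioi 0 := by
  obtain ⟨α₀, β₀, hα₀, h₀⟩ := hg₀.exists_mapsTo_Icc
  obtain ⟨α₁, β₁, hα₁, h₁⟩ := hg₁.exists_mapsTo_Icc
  have hJ := support_subset_of_mapsTo hQ hQ0 (isClosed_Icc.union isClosed_Icc)
    (h₀.mono_right subset_union_left) (h₁.mono_right subset_union_right)
  exact ⟨(isCompact_Icc.union isCompact_Icc).of_isClosed_subset isClosed_support hJ,
    hJ.trans (union_subset (fun x hx => hα₀.trans_le hx.1) fun x hx => hα₁.trans_le hx.1)⟩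

theorem support_eq_image_union_of_isPosMobius (hg₀ : IsPosMobius g₀) (hg₁ : IsPosMobius g₁)
    (hw₀ : Measurable w₀) (hw₁ : Measurable w₁)
    (hw₀pos : ∀ x ∈ Ioi 0, w₀ x ≠ 0) (hw₁pos : ∀ x ∈ Ioi 0, w₁ x ≠ 0) :
    Q.support = g₀ '' Q.support ∪ g₁ '' Q.support := by
  obtain ⟨hS, hpos⟩ := isCompact_support_of_isPosMobius hQ hQ0 hg₀ hg₁
  have hcont₀ : ContinuousOn g₀ (Ioi 0) := hg₀.continuousOn.mono Ioi_subset_Ici_self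
  have hcont₁ : ContinuousOn g₁ (Ioi 0) := hg₁.continuousOn.mono Ioi_subset_Ici_self
  refine subset_antisymm (support_subset_image_union hQ hQ0
    ((hS.image_of_continuousOn (hcont₀.mono hpos)).union
      (hS.image_of_continuousOn (hcont₁.mono hpos))).isClosed) (union_subset ?_ ?_)
  · rintro _ ⟨x, hx, rfl⟩
    exact map_mem_support (fun E hE hE0 => (hQ E hE hE0).symm ▸ le_self_add) hcont₀ hw₀ hw₀pos
      hx (hpos hx) (hg₀.pos (hpos hx).le)
  · rintro _ ⟨x, hx, rfl⟩
    exact map_mem_support (fun E hE hE0 => (hQ E hE hE0).symm ▸ le_add_self) hcont₁ hw₁ hw₁pos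
      hx (hpos hx) (hg₁.pos (hpos hx).le)

end WeightedInvariance

theorem measurable_ofReal_r₀ {π00 π01 π10 π11 ε : ℝ} :
    Measurable fun x => ENNReal.ofReal (r₀ π00 π01 π10 π11 ε x) := by
  unfold r₀
  fun_prop

theorem measurable_ofReal_r₁ {π00 π01 π10 π11 ε : ℝ} :
    Measurable fun x => ENNReal.ofReal (r₁ π00 π01 π10 π11 ε x) := by
  unfold r₁
  fun_prop

section Blackwell

variable {π00 π01 π10 π11 ε : ℝ} (h00 : 0 < π00) (h01 : 0 < π01) (h10 : 0 < π10) (h11 : 0 < π11)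
include h00 h01 h10 h11

theorem isPosMobius_f₀ (hdet : 0 < π00 * π11 - π01 * π10) (hε0 : 0 < ε) (hε1 : ε < 1) :
    IsPosMobius (f₀ π00 π01 π10 π11 ε) :=
  IsPosMobius.const_mul ⟨π00, π10, π01, π11, h00, h10, h01, h11, by linarith, rfl⟩
    (div_pos (sub_pos.mpr hε1) hε0)

theorem isPosMobius_f₁ (hdet : 0 < π00 * π11 - π01 * π10) (hε0 : 0 < ε) (hε1 : ε < 1) :
    IsPosMobius (f₁ π00 π01 π10 π11 ε) :=
  IsPosMobius.const_mul ⟨π00, π10, π01, π11, h00, h10, h01, h11, by linarith, rfl⟩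
    (div_pos hε0 (sub_pos.mpr hε1))

theorem f₁_lt_f₀ (hε0 : 0 < ε) (hε : ε < 1 / 2) {x : ℝ} (hx : 0 ≤ x) :
    f₁ π00 π01 π10 π11 ε x < f₀ π00 π01 π10 π11 ε x := by
  have hκ : ε / (1 - ε) < (1 - ε) / ε := by
    rw [div_lt_div_iff₀ (by linarith) hε0]
    nlinarith
  exact mul_lt_mul_of_pos_right hκ (by positivity)

theorem ofReal_r₀_ne_zero (hε0 : 0 < ε) (hε1 : ε < 1) {x : ℝ} (hx : 0 < x) :
    ENNReal.ofReal (r₀ π00 π01 π10 π11 ε x) ≠ 0 := by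
  have := sub_pos.mpr hε1
  exact (ENNReal.ofReal_pos.mpr (by unfold r₀; positivity)).ne'

theorem ofReal_r₁_ne_zero (hε0 : 0 < ε) (hε1 : ε < 1) {x : ℝ} (hx : 0 < x) :
    ENNReal.ofReal (r₁ π00 π01 π10 π11 ε x) ≠ 0 := by
  have := sub_pos.mpr hε1
  exact (ENNReal.ofReal_pos.mpr (by unfold r₁; positivity)).ne'

end Blackwell

theorem support_blackwell_cantor_general (π00 π01 π10 π11 ε : ℝ)
    (h00 : 0 < π00) (h01 : 0 < π01) (h10 : 0 < π10) (h11 : 0 < π11)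
    (hdet : 0 < π00 * π11 - π01 * π10)
    (hε0 : 0 < ε) (hε : ε < 1 / 2)
    (p₀ p₁ : ℝ) (hp₀ : 0 < p₀) (hp₁ : 0 < p₁)
    (hfix₀ : f₀ π00 π01 π10 π11 ε p₀ = p₀) (hfix₁ : f₁ π00 π01 π10 π11 ε p₁ = p₁)
    (Q : MeasureTheory.Measure ℝ) [MeasureTheory.IsProbabilityMeasure Q]
    (hQpos : Q (Set.Ioi 0) = 1)
    (hQinv : BlackwellInvariant π00 π01 π10 π11 ε Q)
    (hnonoverlap :
      (f₀ π00 π01 π10 π11 ε '' Set.Icc p₁ p₀ ∪ f₁ π00 π01 π10 π11 ε '' Set.Icc p₁ p₀)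
        ⊂ Set.Icc p₁ p₀) :
    (measSupp Q).Nonempty ∧ IsCompact (measSupp Q) ∧ measSupp Q ⊆ Set.Icc p₁ p₀ ∧
      IsTotallyDisconnected (measSupp Q) ∧ Perfect (measSupp Q) := by
  have hε1 : ε < 1 := by linarith
  have hF₀ := isPosMobius_f₀ h00 h01 h10 h11 hdet hε0 hε1
  have hF₁ := isPosMobius_f₁ h00 h01 h10 h11 hdet hε0 hε1
  have hQ0 : Q (Iic 0) = 0 := by
    rw [← compl_Ioi, prob_compl_eq_one_sub measurableSet_Ioi, hQpos, tsub_self]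
  obtain ⟨hS, hSpos⟩ := isCompact_support_of_isPosMobius hQinv hQ0 hF₀ hF₁
  have hself := support_eq_image_union_of_isPosMobius hQinv hQ0 hF₀ hF₁ measurable_ofReal_r₀
    measurable_ofReal_r₁ (fun x hx => ofReal_r₀_ne_zero h00 h01 h10 h11 hε0 hε1 hx)
    (fun x hx => ofReal_r₁_ne_zero h00 h01 h10 h11 hε0 hε1 hx)
  have hSIci : Q.support ⊆ Ici 0 := hSpos.trans Ioi_subset_Ici_self
  have hIIci : Icc p₁ p₀ ⊆ Ici 0 := fun x hx => hp₁.le.trans hx.1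
  have hSI : Q.support ⊆ Icc p₁ p₀ := subset_Icc_of_subset_image_union hS hself.subset
    (fun x hx => (f₁_lt_f₀ h00 h01 h10 h11 hε0 hε (hSpos hx).le).le)
    (hF₀.strictMonoOn.monotoneOn.mono hSIci) (hF₁.strictMonoOn.monotoneOn.mono hSIci)
    (fun _ _ => hF₀.apply_lt_self hp₀ hfix₀) fun _ hx => hF₁.self_lt_apply hfix₁ (hSpos hx).le
  have hgap := lt_of_image_union_ssubset_Icc (hF₀.continuousOn.mono hIIci)
    (hF₁.continuousOn.mono hIIci) hfix₀ hfix₁ hnonoverlap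
  obtain ⟨K₀, hK₀, hlip₀⟩ := hF₀.exists_lipschitzWith_logConj
  obtain ⟨K₁, hK₁, hlip₁⟩ := hF₁.exists_lipschitzWith_logConj
  rw [measSupp_eq_support]
  exact ⟨Measure.nonempty_support (IsProbabilityMeasure.ne_zero Q), hS, hSI,
    isTotallyDisconnected_and_perfect_of_logConj hS hSpos hself
      (disjoint_image_of_lt hSI (hF₀.strictMonoOn.monotoneOn.mono hIIci)
        (hF₁.strictMonoOn.monotoneOn.mono hIIci) hgap)
      (max_lt hK₀ hK₁) (hlip₀.weaken (le_max_left _ _)) (hlip₁.weaken (le_max_right _ _))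
      hF₀.strictMono_logConj.injective hF₁.strictMono_logConj.injective⟩

/-- Cantor-set case of Theorem 3.3: in the non-overlapping case
`f_0(I) ∪ f_1(I) ⊊ I`, the support of Blackwell's measure is a Cantor set:
a nonempty compact subset of `I` that is totally disconnected and perfect. -/
theorem support_blackwell_cantor (π00 π01 π10 π11 ε : ℝ)
    (h00 : 0 < π00) (h01 : 0 < π01) (h10 : 0 < π10) (h11 : 0 < π11)
    (hrow0 : π00 + π01 = 1) (hrow1 : π10 + π11 = 1)
    (hdet : 0 < π00 * π11 - π01 * π10)
    (hε0 : 0 < ε) (hε : ε < 1 / 2)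
    (p₀ p₁ : ℝ) (hp₀ : 0 < p₀) (hp₁ : 0 < p₁)
    (hfix₀ : f₀ π00 π01 π10 π11 ε p₀ = p₀) (hfix₁ : f₁ π00 π01 π10 π11 ε p₁ = p₁)
    (huniq₀ : ∀ q : ℝ, 0 < q → f₀ π00 π01 π10 π11 ε q = q → q = p₀)
    (huniq₁ : ∀ q : ℝ, 0 < q → f₁ π00 π01 π10 π11 ε q = q → q = p₁)
    (Q : MeasureTheory.Measure ℝ) [MeasureTheory.IsProbabilityMeasure Q]
    (hQpos : Q (Set.Ioi 0) = 1)
    (hQinv : BlackwellInvariant π00 π01 π10 π11 ε Q)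
    (hnonoverlap :
      (f₀ π00 π01 π10 π11 ε '' Set.Icc p₁ p₀ ∪ f₁ π00 π01 π10 π11 ε '' Set.Icc p₁ p₀)
        ⊂ Set.Icc p₁ p₀) :
    (measSupp Q).Nonempty ∧ IsCompact (measSupp Q) ∧ measSupp Q ⊆ Set.Icc p₁ p₀ ∧
      IsTotallyDisconnected (measSupp Q) ∧ Perfect (measSupp Q) :=
  support_blackwell_cantor_general π00 π01 π10 π11 ε h00 h01 h10 h11 hdet hε0 hε p₀ p₁ hp₀ hp₁ hfix₀
    hfix₁ Q hQpos hQinv hnonoverlap
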